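/- Let a, b be distinct traceless 2×2 matrices over K (char ≠ 2) with det(a) = det(b) = d ≠ 0 and d + ⟨a,b⟩ ≠ 0, where ⟨a,b⟩ = -(1/2)Tr(ab). Then the matrix M = Id + {a,b}/(d + ⟨a,b⟩) satisfies M·a = b·M, Tr(M) = 2, and det(M) = 2d/(d + ⟨a,b⟩). -/

import Mathlib

/-!
Since `a` and `b` are traceless, Cayley–Hamilton and its polarisation give `a² = b² = -d` and
`ab + ba = tr(ab)`. Hence the unnormalised conjugator `(d + ⟨a,b⟩) M = (d + ⟨a,b⟩) + {a,b}`
equals `d - ba`, and `(d - ba) a = d (a + b) = b (d - ba)`. Finally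
`det (d - ba) = d² - tr(ba) d + det(ba) = 2d (d + ⟨a,b⟩)`.
-/

namespace Matrix

variable {R : Type*} [CommRing R]

theorem mul_self_eq_neg_det_smul_one_of_trace_eq_zero {A : Matrix (Fin 2) (Fin 2) R}
    (hA : A.trace = 0) : A * A = -A.det • 1 := by
  nontriviality R
  have := A.aeval_self_charpoly
  rw [charpoly_fin_two, hA] at this
  simpa [sq, Algebra.algebraMap_eq_smul_one, add_eq_zero_iff_eq_neg] using this

theorem mul_add_mul_eq_trace_smul_one_of_trace_eq_zero {A B : Matrix (Fin 2) (Fin 2) R}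
    (hA : A.trace = 0) (hB : B.trace = 0) : A * B + B * A = (A * B).trace • 1 := by
  rw [trace_fin_two, add_eq_zero_iff_neg_eq'] at hA hB
  ext i j
  fin_cases i <;> fin_cases j <;>
    simp [mul_apply, trace_fin_two, Fin.sum_univ_two, ← hA, ← hB] <;> ring

theorem det_smul_one_sub_fin_two (x : R) (A : Matrix (Fin 2) (Fin 2) R) :
    (x • 1 - A).det = x ^ 2 - A.trace * x + A.det := by
  simp [det_fin_two, trace_fin_two]; ring

end Matrix

theorem semiconjBy_smul_one_sub_mul {R A : Type*} [CommRing R] [Ring A] [Algebra R A]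
    {a b : A} {d : R} (ha : a * a = -d • 1) (hb : b * b = -d • 1) :
    SemiconjBy (d • 1 - b * a) a b := by
  rw [SemiconjBy, sub_mul, mul_sub, mul_assoc, ha, ← mul_assoc, hb]
  simp only [smul_mul_assoc, mul_smul_comm, one_mul, mul_one, neg_smul, mul_neg, neg_mul]
  abel

theorem smul_one_add_half_commutator_eq {K A : Type*} [Field K] [Ring A] [Algebra K A]
    (h2 : (2 : K) ≠ 0) {a b : A} {t : K} (hab : a * b + b * a = t • 1) (d : K) :
    (d + -(2⁻¹ * t)) • (1 : A) + (2⁻¹ : K) • (a * b - b * a) = d • 1 - b * a := by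
  rw [eq_sub_of_add_eq hab]
  match_scalars <;> field_simp <;> ring

theorem conjugator_in_quadratic_algebra_general
    {K : Type*} [Field K] (h2 : (2 : K) ≠ 0)
    (a b : Matrix (Fin 2) (Fin 2) K) (ha : a.trace = 0) (hb : b.trace = 0)
    (d : K) (hda : a.det = d) (hdb : b.det = d)
    (hip : d + (-(2⁻¹ : K) * (a * b).trace) ≠ 0) :
    (1 + (d + (-(2⁻¹ : K) * (a * b).trace))⁻¹ • ((2⁻¹ : K) • (a * b - b * a))) * a
      = b * (1 + (d + (-(2⁻¹ : K) * (a * b).trace))⁻¹ • ((2⁻¹ : K) • (a * b - b * a))) ∧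
    (1 + (d + (-(2⁻¹ : K) * (a * b).trace))⁻¹ • ((2⁻¹ : K) • (a * b - b * a))).trace = 2 ∧
    (1 + (d + (-(2⁻¹ : K) * (a * b).trace))⁻¹ • ((2⁻¹ : K) • (a * b - b * a))).det
      = 2 * d / (d + (-(2⁻¹ : K) * (a * b).trace)) := by
  set c := d + (-(2⁻¹ : K) * (a * b).trace) with hc
  have hM : 1 + c⁻¹ • ((2⁻¹ : K) • (a * b - b * a)) = c⁻¹ • (d • 1 - b * a) := by
    rw [← smul_one_add_half_commutator_eq h2
      (Matrix.mul_add_mul_eq_trace_smul_one_of_trace_eq_zero ha hb) d, smul_add,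
      ← neg_mul, ← hc, inv_smul_smul₀ hip]
  have hdetN : (d • 1 - b * a).det = 2 * d * c := by
    rw [Matrix.det_smul_one_sub_fin_two, Matrix.trace_mul_comm, Matrix.det_mul, hda, hdb, hc]
    field_simp
    ring
  refine ⟨?_, by simp [Matrix.trace_mul_comm a b], ?_⟩
  · rw [hM, smul_mul_assoc, mul_smul_comm]
    congr 1
    exact semiconjBy_smul_one_sub_mul
      (hda ▸ Matrix.mul_self_eq_neg_det_smul_one_of_trace_eq_zero ha)
      (hdb ▸ Matrix.mul_self_eq_neg_det_smul_one_of_trace_eq_zero hb)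
  · rw [hM, Matrix.det_smul, hdetN, Fintype.card_fin]
    field_simp

theorem conjugator_in_quadratic_algebra
    {K : Type*} [Field K] (h2 : (2 : K) ≠ 0)
    (a b : Matrix (Fin 2) (Fin 2) K) (ha : a.trace = 0) (hb : b.trace = 0)
    (hab : a ≠ b) (d : K) (hda : a.det = d) (hdb : b.det = d) (hd : d ≠ 0)
    (hip : d + (-(2⁻¹ : K) * (a * b).trace) ≠ 0) :
    (1 + (d + (-(2⁻¹ : K) * (a * b).trace))⁻¹ • ((2⁻¹ : K) • (a * b - b * a))) * a
      = b * (1 + (d + (-(2⁻¹ : K) * (a * b).trace))⁻¹ • ((2⁻¹ : K) • (a * b - b * a))) ∧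
    (1 + (d + (-(2⁻¹ : K) * (a * b).trace))⁻¹ • ((2⁻¹ : K) • (a * b - b * a))).trace = 2 ∧
    (1 + (d + (-(2⁻¹ : K) * (a * b).trace))⁻¹ • ((2⁻¹ : K) • (a * b - b * a))).det
      = 2 * d / (d + (-(2⁻¹ : K) * (a * b).trace)) :=
  conjugator_in_quadratic_algebra_general h2 a b ha hb d hda hdb hip
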